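/- Let P be a finite cyclic group and let 0 → A → B → C → 0 be a short exact sequence of P-modules. If the Herbrand quotients h_P(A) and h_P(C) are defined (i.e., H^1 and H^2 of P with these coefficients are finite), then h_P(B) is defined and h_P(B) = h_P(A) · h_P(C). -/

import Mathlib

/-!
Over a finite cyclic group the cohomology `Hⁿ(P, M)` is periodic of period two in `n ≥ 1`
(computed in Mathlib from the periodic resolution), so `|H^{2m+1}(M)| = |H¹(M)|` and
`|H^{2m+2}(M)| = |H²(M)|`. In the long exact cohomology sequence of `0 → A → B → C → 0` each term
has cardinality the product of the images of its incoming and outgoing maps. Over the six terms of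
degrees `2m + 1` and `2m + 2` this telescopes to `a · r (m + 1) = b · r m`, where
`r m = |im (δ : H^{2m}(C) → H^{2m+1}(A))|` and `a / b = h(B) / (h(A) h(C))`. The sequence `r` is
positive and bounded by `|H¹(A)|`, so it cannot grow or shrink geometrically, and `a = b`.
This avoids having to check that the periodicity isomorphisms commute with the connecting maps.
-/

/-- The Herbrand quotient `|H^2(P,M)| / |H^1(P,M)|` of a representation. -/
noncomputable def herbrand {k P V : Type} [CommRing k] [Group P]
    [AddCommGroup V] [Module k V] (ρ : Representation k P V) : ℚ :=
  (Nat.card (groupCohomology (Rep.of ρ) 2) : ℚ) /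
    (Nat.card (groupCohomology (Rep.of ρ) 1) : ℚ)

open CategoryTheory

universe u

section Counting

variable {R M N Q : Type*} [Ring R] [AddCommGroup M] [AddCommGroup N] [AddCommGroup Q]
  [Module R M] [Module R N] [Module R Q]

theorem LinearMap.card_ker_mul_card_range (f : M →ₗ[R] N) :
    Nat.card (LinearMap.ker f) * Nat.card (LinearMap.range f) = Nat.card M := by
  rw [← Nat.card_congr f.quotKerEquivRange.toEquiv]
  exact (LinearMap.ker f).toAddSubgroup.card_mul_index

theorem LinearMap.card_eq_card_range_mul_card_range {f : M →ₗ[R] N} {g : N →ₗ[R] Q}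
    (h : LinearMap.range f = LinearMap.ker g) :
    Nat.card N = Nat.card (LinearMap.range f) * Nat.card (LinearMap.range g) := by
  rw [h, g.card_ker_mul_card_range]

theorem LinearMap.finite_of_range_eq_ker [Finite M] [Finite Q] {f : M →ₗ[R] N} {g : N →ₗ[R] Q}
    (h : LinearMap.range f = LinearMap.ker g) : Finite N := by
  have : Finite (LinearMap.range f) := (Set.finite_range f).to_subtype
  apply Nat.finite_of_card_ne_zero
  rw [card_eq_card_range_mul_card_range h]
  exact (Nat.mul_pos Nat.card_pos Nat.card_pos).ne'

end Counting

theorem eq_of_mul_succ_eq_mul_of_bounded {a b c : ℕ} {r : ℕ → ℕ}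
    (h : ∀ m, a * r (m + 1) = b * r m) (hpos : ∀ m, 0 < r m) (hle : ∀ m, r m ≤ c) : a = b := by
  by_contra hab
  have hinj : Function.Injective r := by
    rcases Nat.lt_or_gt_of_ne hab with hlt | hlt
    · refine (strictMono_nat_of_lt_succ fun m => ?_).injective
      nlinarith [h m, hpos m, hpos (m + 1)]
    · refine (strictAnti_nat_of_succ_lt fun m => ?_).injective
      nlinarith [h m, hpos m, hpos (m + 1)]
  exact (Set.finite_Iic c).not_infinite
    (Set.infinite_of_injective_forall_mem hinj fun m => Set.mem_Iic.mpr (hle m))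

namespace Rep

variable {k G : Type u} [CommRing k] [Monoid G] {X Y Z : Type u} [AddCommGroup X]
  [AddCommGroup Y] [AddCommGroup Z] [Module k X] [Module k Y] [Module k Z]
  {ρ : Representation k G X} {σ : Representation k G Y} {τ : Representation k G Z}

noncomputable def shortComplexOfRangeEqKer (f : ρ.IntertwiningMap σ) (g : σ.IntertwiningMap τ)
    (h : LinearMap.range f.toLinearMap = LinearMap.ker g.toLinearMap) : ShortComplex (Rep k G) :=
  ShortComplex.mk (ofHom f) (ofHom g) (by
    ext x
    have hx : f x ∈ LinearMap.ker g.toLinearMap := h ▸ LinearMap.mem_range_self f.toLinearMap x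
    exact hx)

theorem shortExact_shortComplexOfRangeEqKer (f : ρ.IntertwiningMap σ) (g : σ.IntertwiningMap τ)
    (h : LinearMap.range f.toLinearMap = LinearMap.ker g.toLinearMap)
    (hf : Function.Injective f) (hg : Function.Surjective g) :
    (shortComplexOfRangeEqKer f g h).ShortExact where
  exact := by
    rw [← ShortComplex.exact_map_iff_of_faithful _ (forget₂ (Rep k G) (ModuleCat k)),
      ShortComplex.moduleCat_exact_iff_range_eq_ker]
    exact h
  mono_f := (mono_iff_injective _).mpr hf
  epi_g := (epi_iff_surjective _).mpr hg

end Rep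

namespace groupCohomology

section Periodicity

variable {k G : Type u} [CommRing k] [Group G] [Finite G] [IsCyclic G] (A : Rep k G)

theorem card_eq_card_one_of_odd {n : ℕ} (hn : Odd n) :
    Nat.card (groupCohomology A n) = Nat.card (groupCohomology A 1) := by
  let : CommGroup G := IsCyclic.commGroup
  have := Fintype.ofFinite G
  obtain ⟨g, hg⟩ := IsCyclic.exists_generator (α := G)
  exact Nat.card_congr (Rep.FiniteCyclicGroup.groupCohomologyIsoOdd A g hg n hn ≪≫
    (Rep.FiniteCyclicGroup.groupCohomologyIsoOdd A g hg 1 odd_one).symm).toLinearEquiv.toEquiv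

theorem card_eq_card_two_of_even {n : ℕ} [NeZero n] (hn : Even n) :
    Nat.card (groupCohomology A n) = Nat.card (groupCohomology A 2) := by
  let : CommGroup G := IsCyclic.commGroup
  have := Fintype.ofFinite G
  obtain ⟨g, hg⟩ := IsCyclic.exists_generator (α := G)
  exact Nat.card_congr (Rep.FiniteCyclicGroup.groupCohomologyIsoEven A g hg n hn ≪≫
    (Rep.FiniteCyclicGroup.groupCohomologyIsoEven A g hg 2 even_two).symm).toLinearEquiv.toEquiv

end Periodicity

section LongExactSequence

variable {k G : Type u} [CommRing k] [Group G] {S : ShortComplex (Rep k G)} (hS : S.ShortExact)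
include hS

theorem card_X₂_eq_mul (n : ℕ) :
    Nat.card (groupCohomology S.X₂ n) = Nat.card (LinearMap.range (mapShortComplex₂ S n).f.hom) *
      Nat.card (LinearMap.range (mapShortComplex₂ S n).g.hom) :=
  LinearMap.card_eq_card_range_mul_card_range (mapShortComplex₂_exact hS n).moduleCat_range_eq_ker

theorem card_X₃_eq_mul (n : ℕ) :
    Nat.card (groupCohomology S.X₃ n) = Nat.card (LinearMap.range (mapShortComplex₂ S n).g.hom) *
      Nat.card (LinearMap.range (δ hS n (n + 1) rfl).hom) :=
  LinearMap.card_eq_card_range_mul_card_range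
    (mapShortComplex₃_exact hS (rfl : n + 1 = n + 1)).moduleCat_range_eq_ker

theorem card_X₁_succ_eq_mul (n : ℕ) :
    Nat.card (groupCohomology S.X₁ (n + 1)) =
      Nat.card (LinearMap.range (δ hS n (n + 1) rfl).hom) *
        Nat.card (LinearMap.range (mapShortComplex₂ S (n + 1)).f.hom) :=
  LinearMap.card_eq_card_range_mul_card_range
    (mapShortComplex₁_exact hS (rfl : n + 1 = n + 1)).moduleCat_range_eq_ker

theorem finite_X₂ (n : ℕ) [Finite (groupCohomology S.X₁ n)] [Finite (groupCohomology S.X₃ n)] :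
    Finite (groupCohomology S.X₂ n) :=
  LinearMap.finite_of_range_eq_ker (M := groupCohomology S.X₁ n) (Q := groupCohomology S.X₃ n)
    (mapShortComplex₂_exact hS n).moduleCat_range_eq_ker

variable [Finite G] [IsCyclic G]

theorem card_mul_card_range_δ_add_two (m : ℕ) :
    Nat.card (groupCohomology S.X₁ 1) * Nat.card (groupCohomology S.X₃ 1) *
        Nat.card (groupCohomology S.X₂ 2) *
        Nat.card (LinearMap.range (δ hS (2 * m + 1 + 1) (2 * m + 1 + 1 + 1) rfl).hom) =
      Nat.card (groupCohomology S.X₂ 1) * Nat.card (groupCohomology S.X₁ 2) *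
        Nat.card (groupCohomology S.X₃ 2) *
        Nat.card (LinearMap.range (δ hS (2 * m) (2 * m + 1) rfl).hom) := by
  have hodd : Odd (2 * m + 1) := odd_two_mul_add_one m
  have heven : Even (2 * m + 1 + 1) := ⟨m + 1, by ring⟩
  rw [← card_eq_card_one_of_odd S.X₁ hodd, ← card_eq_card_one_of_odd S.X₂ hodd,
    ← card_eq_card_one_of_odd S.X₃ hodd, ← card_eq_card_two_of_even S.X₁ heven,
    ← card_eq_card_two_of_even S.X₂ heven, ← card_eq_card_two_of_even S.X₃ heven,
    card_X₁_succ_eq_mul hS, card_X₁_succ_eq_mul hS, card_X₂_eq_mul hS, card_X₂_eq_mul hS,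
    card_X₃_eq_mul hS, card_X₃_eq_mul hS]
  ring

theorem finite_X₂_and_card_X₂_two_mul_eq (hA1 : Finite (groupCohomology S.X₁ 1))
    (hA2 : Finite (groupCohomology S.X₁ 2)) (hC1 : Finite (groupCohomology S.X₃ 1))
    (hC2 : Finite (groupCohomology S.X₃ 2)) :
    Finite (groupCohomology S.X₂ 1) ∧ Finite (groupCohomology S.X₂ 2) ∧
      Nat.card (groupCohomology S.X₂ 2) * (Nat.card (groupCohomology S.X₁ 1) *
        Nat.card (groupCohomology S.X₃ 1)) =
      Nat.card (groupCohomology S.X₁ 2) * Nat.card (groupCohomology S.X₃ 2) *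
        Nat.card (groupCohomology S.X₂ 1) := by
  have hcard (m : ℕ) : Nat.card (groupCohomology S.X₁ (2 * m + 1)) =
      Nat.card (groupCohomology S.X₁ 1) :=
    card_eq_card_one_of_odd S.X₁ (odd_two_mul_add_one m)
  have hfin (m : ℕ) : Finite (groupCohomology S.X₁ (2 * m + 1)) :=
    Nat.finite_of_card_ne_zero (by rw [hcard]; exact Nat.card_pos.ne')
  have key := eq_of_mul_succ_eq_mul_of_bounded
    (r := fun m => Nat.card (LinearMap.range (δ hS (2 * m) (2 * m + 1) rfl).hom))
    (card_mul_card_range_δ_add_two hS)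
    (fun m => have := hfin m; Nat.card_pos)
    (fun m => have := hfin m; (Finite.card_subtype_le _).trans (hcard m).le)
  exact ⟨finite_X₂ hS 1, finite_X₂ hS 2, by linarith⟩

end LongExactSequence

end groupCohomology

theorem herbrand_X₂_eq_mul {k G : Type} [CommRing k] [Group G] [Finite G] [IsCyclic G]
    {S : ShortComplex (Rep k G)} (hS : S.ShortExact)
    (hA1 : Finite (groupCohomology S.X₁ 1)) (hA2 : Finite (groupCohomology S.X₁ 2))
    (hC1 : Finite (groupCohomology S.X₃ 1)) (hC2 : Finite (groupCohomology S.X₃ 2)) :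
    Finite (groupCohomology S.X₂ 1) ∧ Finite (groupCohomology S.X₂ 2) ∧
      herbrand S.X₂.ρ = herbrand S.X₁.ρ * herbrand S.X₃.ρ := by
  obtain ⟨hB1, hB2, hcard⟩ :=
    groupCohomology.finite_X₂_and_card_X₂_two_mul_eq hS hA1 hA2 hC1 hC2
  refine ⟨hB1, hB2, ?_⟩
  have hpos {M : ModuleCat k} (_ : Finite M) : (Nat.card M : ℚ) ≠ 0 :=
    Nat.cast_ne_zero.mpr Nat.card_pos.ne'
  rw [herbrand, herbrand, herbrand, div_mul_div_comm,
    div_eq_div_iff (hpos hB1) (mul_ne_zero (hpos hA1) (hpos hC1))]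
  exact_mod_cast hcard

/-- multiplicativity of the Herbrand quotient in short exact sequences of
modules over a finite cyclic group `P`. -/
theorem statement5 (P : Type) [Group P] [Finite P] [IsCyclic P]
    (A B C : Type) [AddCommGroup A] [AddCommGroup B] [AddCommGroup C]
    (ρA : Representation ℤ P A) (ρB : Representation ℤ P B) (ρC : Representation ℤ P C)
    (f : A →ₗ[ℤ] B) (g : B →ₗ[ℤ] C)
    (hf : ∀ (s : P) (x : A), f (ρA s x) = ρB s (f x))
    (hg : ∀ (s : P) (x : B), g (ρB s x) = ρC s (g x))
    (hinj : Function.Injective f) (hsurj : Function.Surjective g)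
    (hexact : LinearMap.range f = LinearMap.ker g)
    (hA1 : Finite (groupCohomology (Rep.of ρA) 1))
    (hA2 : Finite (groupCohomology (Rep.of ρA) 2))
    (hC1 : Finite (groupCohomology (Rep.of ρC) 1))
    (hC2 : Finite (groupCohomology (Rep.of ρC) 2)) :
    Finite (groupCohomology (Rep.of ρB) 1) ∧
    Finite (groupCohomology (Rep.of ρB) 2) ∧
    herbrand ρB = herbrand ρA * herbrand ρC :=
  herbrand_X₂_eq_mul (Rep.shortExact_shortComplexOfRangeEqKer
    (f.intertwiningMap_of_isIntertwiningMap ρA ρB hf)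
    (g.intertwiningMap_of_isIntertwiningMap ρB ρC hg) hexact hinj hsurj) hA1 hA2 hC1 hC2
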